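/- The space H(A₂) is not σ-compact. -/

import Mathlib

open Set TopologicalSpace Topology

/-- The Hattori topology τ(A) on ℝ: generated by the Euclidean open sets together with
all sets [x, x+ε) with x ∈ ℝ \ A and ε > 0. -/
def hattori (A : Set ℝ) : TopologicalSpace ℝ :=
  TopologicalSpace.generateFrom
    ({s : Set ℝ | IsOpen s} ∪ {s : Set ℝ | ∃ x ∉ A, ∃ ε > 0, s = Set.Ico x (x + ε)})

/-- `B₂`: the set of right endpoints of the closed intervals appearing in the standard
middle-thirds construction of the Cantor set. -/
def B2 : Set ℝ :=
  {x | ∃ n : ℕ, ∃ c : ℕ → ℝ, (∀ i, c i = 0 ∨ c i = 2) ∧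
    x = (∑ i ∈ Finset.range n, c i / 3 ^ (i + 1)) + 1 / 3 ^ n}

/-- `A₂ = ℝ \ B₂`. -/
def A2 : Set ℝ := B2ᶜ

/-!
Each Hattori-compact set `K` is Euclidean compact, and no point `b ∉ A` is a Euclidean limit of
points of `K` below `b`: they would have a Hattori cluster point in `K`, necessarily `b`, but
`[b, b + 1)` is a Hattori neighbourhood of `b` missing them. If `H(A₂)` were the union of compact
sets `Kₙ`, Baire's theorem on the closed set `closure B₂` would give an open `U` meeting `B₂` with
`U ∩ closure B₂ ⊆ Kₙ`; a point `b ∈ B₂ ∩ U` is a limit from the left of the points `b - 2 / 3ᵐ`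
of `B₂`, which eventually lie in `U`, hence in `Kₙ`.
-/

open Filter

theorem hattori_le (A : Set ℝ) : hattori A ≤ (inferInstance : TopologicalSpace ℝ) := by
  rw [← generateFrom_setOfPred_isOpen (inferInstance : TopologicalSpace ℝ), hattori]
  exact generateFrom_anti subset_union_left

section Hattori

variable {A : Set ℝ}

theorem nhds_hattori_le (x : ℝ) : @nhds ℝ (hattori A) x ≤ 𝓝 x := nhds_mono (hattori_le A)

theorem Ico_mem_nhds_hattori {x : ℝ} (hx : x ∉ A) {ε : ℝ} (hε : 0 < ε) :
    Ico x (x + ε) ∈ @nhds ℝ (hattori A) x :=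
  @IsOpen.mem_nhds _ (hattori A) _ _ (GenerateOpen.basic _ (Or.inr ⟨x, hx, ε, hε, rfl⟩))
    ⟨le_rfl, by linarith⟩

theorem IsCompact.of_hattori {K : Set ℝ} (hK : @IsCompact ℝ (hattori A) K) : IsCompact K := by
  simpa using @IsCompact.image _ _ (hattori A) _ _ _ hK (continuous_id_of_le (hattori_le A))

theorem notMem_closure_inter_Iio_of_isCompact_hattori {K : Set ℝ}
    (hK : @IsCompact ℝ (hattori A) K) {b : ℝ} (hb : b ∉ A) : b ∉ closure (K ∩ Iio b) := by
  intro hbK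
  rw [mem_closure_iff_nhdsWithin_neBot] at hbK
  obtain ⟨w, -, hw⟩ := @IsCompact.exists_clusterPt _ (hattori A) _ hK _ hbK
    (le_principal_iff.2 (mem_of_superset self_mem_nhdsWithin inter_subset_left))
  have hwb : w = b :=
    eq_of_nhds_neBot (NeBot.mono hw (inf_le_inf (nhds_hattori_le w) nhdsWithin_le_nhds))
  subst hwb
  have hIio : Iio w ∈ 𝓝[K ∩ Iio w] w := mem_of_superset self_mem_nhdsWithin inter_subset_right
  refine hw.ne (empty_mem_iff_bot.1 ?_)
  convert inter_mem_inf (Ico_mem_nhds_hattori hb one_pos) hIio using 1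
  ext x
  simp

end Hattori

/-- The right endpoints of the `2ⁿ` intervals of the `n`-th stage, so that `B2 = ⋃ n, B2Level n`. -/
def B2Level (n : ℕ) : Set ℝ :=
  {x | ∃ c : ℕ → ℝ, (∀ i, c i = 0 ∨ c i = 2) ∧
    x = (∑ i ∈ Finset.range n, c i / 3 ^ (i + 1)) + 1 / 3 ^ n}

theorem B2Level_subset_B2 (n : ℕ) : B2Level n ⊆ B2 := fun _ hx => ⟨n, hx⟩

/-- Appending the digit `d` replaces the last interval `[x - 3⁻ⁿ, x]` of the construction by its
left or right third. -/
theorem add_mem_B2Level_succ {n : ℕ} {x : ℝ} (hx : x ∈ B2Level n) {d : ℝ} (hd : d = 0 ∨ d = 2) :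
    x - 1 / 3 ^ n + (d + 1) / 3 ^ (n + 1) ∈ B2Level (n + 1) := by
  obtain ⟨c, hc, rfl⟩ := hx
  refine ⟨Function.update c n d, fun i => ?_, ?_⟩
  · rcases eq_or_ne i n with rfl | hi
    · simpa using hd
    · simpa [hi] using hc i
  · have hsum : ∑ i ∈ Finset.range n, Function.update c n d i / 3 ^ (i + 1)
        = ∑ i ∈ Finset.range n, c i / 3 ^ (i + 1) :=
      Finset.sum_congr rfl fun i hi => by rw [Function.update_of_ne (Finset.mem_range.1 hi).ne]
    rw [Finset.sum_range_succ, hsum, Function.update_self]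
    ring

theorem B2Level_mono : Monotone B2Level := by
  refine monotone_nat_of_le_succ fun n x hx => ?_
  convert add_mem_B2Level_succ hx (Or.inr rfl) using 1
  field_simp
  ring

theorem sub_mem_B2Level_succ {n : ℕ} {x : ℝ} (hx : x ∈ B2Level n) :
    x - 2 / 3 ^ (n + 1) ∈ B2Level (n + 1) := by
  convert add_mem_B2Level_succ hx (Or.inl rfl) using 1
  field_simp
  ring

theorem mem_closure_B2_inter_Iio {b : ℝ} (hb : b ∈ B2) : b ∈ closure (B2 ∩ Iio b) := by
  obtain ⟨n, hn⟩ := hb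
  have hlim : Tendsto (fun k : ℕ => b - 2 / 3 ^ (k + (n + 1))) atTop (𝓝 b) := by
    have hpow : Tendsto (fun k : ℕ => (3 : ℝ) ^ (k + (n + 1))) atTop atTop :=
      (tendsto_pow_atTop_atTop_of_one_lt (by norm_num)).comp (tendsto_add_atTop_nat (n + 1))
    simpa using (tendsto_const_nhds (x := b)).sub
      ((tendsto_const_nhds (x := (2 : ℝ))).div_atTop hpow)
  refine mem_closure_of_tendsto hlim (Eventually.of_forall fun k => ⟨?_, ?_⟩)
  · exact B2Level_subset_B2 (k + n + 1) <|
      sub_mem_B2Level_succ (B2Level_mono (Nat.le_add_left n k) hn)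
  · simp only [mem_Iio]
    linarith [show (0 : ℝ) < 2 / 3 ^ (k + (n + 1)) by positivity]

theorem exists_isOpen_inter_subset_of_subset_iUnion_isClosed {X : Type*} [PseudoEMetricSpace X]
    [CompleteSpace X] {D : Set X} (hD : IsClosed D) (hne : D.Nonempty) {K : ℕ → Set X}
    (hK : ∀ n, IsClosed (K n)) (hcov : D ⊆ ⋃ n, K n) :
    ∃ n U, IsOpen U ∧ (U ∩ D).Nonempty ∧ U ∩ D ⊆ K n := by
  have := hD.completeSpace_coe
  have := hne.to_subtype
  obtain ⟨n, z, hz⟩ := nonempty_interior_of_iUnion_of_closed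
    (fun n => (hK n).preimage (continuous_subtype_val (p := (· ∈ D))))
    (by rw [← preimage_iUnion, eq_univ_iff_forall]; exact fun x => hcov x.2)
  obtain ⟨U, hU, hUeq⟩ := isOpen_induced_iff.1 (isOpen_interior (s := ((↑) : D → X) ⁻¹' K n))
  refine ⟨n, U, hU, ⟨z, by rw [← hUeq] at hz; exact hz, z.2⟩, fun x ⟨hxU, hxD⟩ => ?_⟩
  have : (⟨x, hxD⟩ : D) ∈ interior (((↑) : D → X) ⁻¹' K n) := hUeq ▸ hxU
  exact interior_subset (s := ((↑) : D → X) ⁻¹' K n) this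

/-- The space H(A₂) is not σ-compact. -/
theorem not_sigmaCompact_hattori_A2 : ¬ @SigmaCompactSpace ℝ (hattori A2) := by
  intro h
  obtain ⟨K, hK, hcov⟩ := @isSigmaCompact_univ ℝ (hattori A2) h
  obtain ⟨n, U, hU, ⟨z, hzU, hzD⟩, hUK⟩ :=
    exists_isOpen_inter_subset_of_subset_iUnion_isClosed (isClosed_closure (s := B2))
      ⟨1, subset_closure ⟨0, 0, fun _ => Or.inl rfl, by simp⟩⟩
      (fun n => (hK n).of_hattori.isClosed) (hcov.symm ▸ subset_univ _)
  obtain ⟨b, hbU, hb⟩ := mem_closure_iff.1 hzD U hU hzU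
  refine notMem_closure_inter_Iio_of_isCompact_hattori (hK n) (not_not.2 hb : b ∉ A2) ?_
  refine closure_mono ?_ (hU.inter_closure ⟨hbU, mem_closure_B2_inter_Iio hb⟩)
  rintro x ⟨hxU, hxB, hxb⟩
  exact ⟨hUK ⟨hxU, subset_closure hxB⟩, hxb⟩
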